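/- Soundness and completeness of C_n with respect to RM_{C_n}: for any set of formulas Γ ∪ {φ} over Σ, Γ ⊢_{C_n} φ if and only if for every ν ∈ F_{C_n} with ν[Γ] ⊆ D_n one has ν(φ) ∈ D_n. (This may be derived from the corresponding soundness/completeness of C_n with respect to bivaluations together with the translations between bivaluations and F_{C_n} valuations.) -/

import Mathlib

/-- Formulas over the signature Σ (¬ unary; ∧, ∨, → binary). -/
inductive PFs : Type
  | var : ℕ → PFs
  | neg : PFs → PFs
  | and : PFs → PFs → PFs
  | or : PFs → PFs → PFs
  | imp : PFs → PFs → PFs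

/-- `pw α k` is `α^k`: `α^0 = α` and `α^{j+1} = ¬(α^j ∧ ¬(α^j))`. -/
def pw (α : PFs) : ℕ → PFs
  | 0 => α
  | k + 1 => PFs.neg ((pw α k).and (PFs.neg (pw α k)))

/-- Snapshots for `C_n`: `(n+1)`-tuples over `2` with at most one coordinate
equal to `0` (i.e. `false`). -/
def Snap (n : ℕ) : Type :=
  {z : Fin (n + 1) → Bool // ∀ i j : Fin (n + 1), z i = false → z j = false → i = j}

/-- `T_n = (1,0,1,…,1)`. -/
def Tval (n : ℕ) : Snap n :=
  ⟨fun i => decide ((i : ℕ) ≠ 1), by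
    intro i j hi hj
    simp only [decide_eq_false_iff_not, not_not] at hi hj
    exact Fin.ext (hi.trans hj.symm)⟩

/-- `F_n = (0,1,1,…,1)`. -/
def Fval (n : ℕ) : Snap n :=
  ⟨fun i => decide ((i : ℕ) ≠ 0), by
    intro i j hi hj
    simp only [decide_eq_false_iff_not, not_not] at hi hj
    exact Fin.ext (hi.trans hj.symm)⟩

/-- `t^n_i`: all coordinates `1` except (when it exists) the one in position
`i+3`, i.e. index `i+2`; for `i = n-1` all coordinates equal `1`. -/
def tval (n i : ℕ) : Snap n :=
  ⟨fun j => decide ((j : ℕ) ≠ i + 2), by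
    intro j j' hj hj'
    simp only [decide_eq_false_iff_not, not_not] at hj hj'
    exact Fin.ext (hj.trans hj'.symm)⟩

/-- Designated values `D_n = B_n \ {F_n} = {z : z₁ = 1}`. -/
def Dn (n : ℕ) : Set (Snap n) := {z | z.1 0 = true}

/-- Boolean values `Boo_n = {z : z₁ ∧ z₂ = 0}`. -/
def BooN (n : ℕ) : Set (Snap n) := {z | (z.1 0 && z.1 1) = false}

/-- Inconsistent values `I_n = B_n \ {T_n, F_n}`. -/
def InN (n : ℕ) : Set (Snap n) := {z | z ≠ Tval n ∧ z ≠ Fval n}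

/-- `¬̃ z = {w : w₁ = z₂ and w₂ ≤ z₁}`. -/
def negN {n : ℕ} (z : Snap n) : Set (Snap n) :=
  {w | w.1 0 = z.1 1 ∧ (w.1 1 = true → z.1 0 = true)}

open Classical in
/-- `z #̃ w`: Boolean (inside `Boo_n`) when both arguments are Boolean values,
non-deterministic (first coordinate determined classically) otherwise. -/
noncomputable def binN {n : ℕ} (f : Bool → Bool → Bool) (z w : Snap n) :
    Set (Snap n) :=
  if z ∈ BooN n ∧ w ∈ BooN n then
    {u | u ∈ BooN n ∧ u.1 0 = f (z.1 0) (w.1 0)}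
  else
    {u | u.1 0 = f (z.1 0) (w.1 0)}

/-- `ν` is a multialgebra homomorphism into `A_{C_n}`. -/
def IsHomN (n : ℕ) (ν : PFs → Snap n) : Prop :=
  (∀ α, ν (PFs.neg α) ∈ negN (ν α)) ∧
  (∀ α β, ν (PFs.and α β) ∈ binN (· && ·) (ν α) (ν β)) ∧
  (∀ α β, ν (PFs.or α β) ∈ binN (· || ·) (ν α) (ν β)) ∧
  (∀ α β, ν (PFs.imp α β) ∈ binN (fun a b => !a || b) (ν α) (ν β))

/-- `ν ∈ F_{C_n}`: a homomorphism satisfying the restrictions on valuations. -/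
def FCn (n : ℕ) (ν : PFs → Snap n) : Prop :=
  IsHomN n ν ∧
  (∀ α, ν α = tval n 0 → ν (PFs.and α (PFs.neg α)) = Tval n) ∧
  (∀ α k, 1 ≤ k → k ≤ n - 1 → ν α = tval n k →
    ν (PFs.and α (PFs.neg α)) ∈ InN n ∧ ν (pw α 1) = tval n (k - 1))

/-- `pc α j` is `α^{(j)}`: `α^{(1)} = α^1` and `α^{(j+1)} = α^{(j)} ∧ α^{j+1}`. -/
def pc (α : PFs) : ℕ → PFs
  | 0 => α
  | 1 => pw α 1
  | j + 2 => (pc α (j + 1)).and (pw α (j + 2))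

/-- Derivability in da Costa's calculus `C_n` (Ax1–Ax10, bc_n, P_n, MP). -/
inductive ProvCn (n : ℕ) (Γ : Set PFs) : PFs → Prop
  | prem {φ} : φ ∈ Γ → ProvCn n Γ φ
  | ax1 (α β : PFs) : ProvCn n Γ (α.imp (β.imp α))
  | ax2 (α β γ : PFs) :
      ProvCn n Γ ((α.imp (β.imp γ)).imp ((α.imp β).imp (α.imp γ)))
  | ax3 (α β : PFs) : ProvCn n Γ (α.imp (β.imp (α.and β)))
  | ax4 (α β : PFs) : ProvCn n Γ ((α.and β).imp α)
  | ax5 (α β : PFs) : ProvCn n Γ ((α.and β).imp β)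
  | ax6 (α β : PFs) : ProvCn n Γ (α.imp (α.or β))
  | ax7 (α β : PFs) : ProvCn n Γ (β.imp (α.or β))
  | ax8 (α β γ : PFs) :
      ProvCn n Γ ((α.imp γ).imp ((β.imp γ).imp ((α.or β).imp γ)))
  | ax9 (α : PFs) : ProvCn n Γ (α.or α.neg)
  | ax10 (α : PFs) : ProvCn n Γ (α.neg.neg.imp α)
  | bcn (α β : PFs) : ProvCn n Γ ((pc α n).imp (α.imp (α.neg.imp β)))
  | pn (α β : PFs) : ProvCn n Γ (((pc α n).and (pc β n)).imp
      ((pc (α.and β) n).and ((pc (α.or β) n).and (pc (α.imp β) n))))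
  | mp {α β : PFs} : ProvCn n Γ (α.imp β) → ProvCn n Γ α → ProvCn n Γ β

/-!
Both directions go through the bivaluation semantics of `C_n`. Derivations are sound for
`C_n`-bivaluations, and a non-derivable `φ` is refuted by the membership function of a
`φ`-saturated extension of `Γ`; it is a bivaluation because `α ∨ (α → β)` is derivable, which
makes implication classical there.

A valuation `ν ∈ F_{C_n}` induces the bivaluation `α ↦ (ν α)₁`: a non-Boolean `ν α` is some
`t^n_k`, and then the restrictions on `F_{C_n}` make `ν (α^{k+1})` undesignated, so `α^{(n)}` is
designated only for Boolean `ν α`. Conversely a bivaluation `b` induces the valuation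
`ν α = (b α, b ¬α, b α^1, …, b α^{n-1})`. It has at most one zero because a zero coordinate makes
`α` or one of its powers consistent, and all later powers of a consistent formula are true.
-/
namespace ProvCn

variable {n : ℕ} {Γ Δ : Set PFs}

theorem induction_prem_valid {motive : PFs → Prop} (prem : ∀ φ ∈ Γ, motive φ)
    (valid : ∀ φ, (∀ Δ, ProvCn n Δ φ) → motive φ)
    (mp : ∀ α β, motive (α.imp β) → motive α → motive β) {φ : PFs} (h : ProvCn n Γ φ) :
    motive φ := by
  induction h with
  | prem hφ => exact prem _ hφ
  | ax1 α β => exact valid _ fun _ => .ax1 α β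
  | ax2 α β γ => exact valid _ fun _ => .ax2 α β γ
  | ax3 α β => exact valid _ fun _ => .ax3 α β
  | ax4 α β => exact valid _ fun _ => .ax4 α β
  | ax5 α β => exact valid _ fun _ => .ax5 α β
  | ax6 α β => exact valid _ fun _ => .ax6 α β
  | ax7 α β => exact valid _ fun _ => .ax7 α β
  | ax8 α β γ => exact valid _ fun _ => .ax8 α β γ
  | ax9 α => exact valid _ fun _ => .ax9 α
  | ax10 α => exact valid _ fun _ => .ax10 α
  | bcn α β => exact valid _ fun _ => .bcn α β
  | pn α β => exact valid _ fun _ => .pn α β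
  | mp _ _ ih₁ ih₂ => exact mp _ _ ih₁ ih₂

theorem mono (hΓΔ : Γ ⊆ Δ) {φ : PFs} (h : ProvCn n Γ φ) : ProvCn n Δ φ :=
  h.induction_prem_valid (fun _ hφ => .prem (hΓΔ hφ)) (fun _ hφ => hφ Δ) fun _ _ => .mp

theorem imp_self (α : PFs) : ProvCn n Γ (α.imp α) :=
  ((ProvCn.ax2 α (α.imp α) α).mp (.ax1 α (α.imp α))).mp (.ax1 α α)

theorem deduction {α β : PFs} (h : ProvCn n (insert α Γ) β) : ProvCn n Γ (α.imp β) := by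
  refine h.induction_prem_valid (fun φ hφ => ?_) (fun φ hφ => (ProvCn.ax1 φ α).mp (hφ Γ))
    fun _ _ ih₁ ih₂ => ((ProvCn.ax2 α _ _).mp ih₁).mp ih₂
  rcases hφ with rfl | hφ
  · exact imp_self φ
  · exact (ProvCn.ax1 φ α).mp (.prem hφ)

theorem of_insert {α β : PFs} (hα : ProvCn n Γ α) (h : ProvCn n (insert α Γ) β) :
    ProvCn n Γ β :=
  (deduction h).mp hα

theorem or_elim {α β γ : PFs} (h : ProvCn n Γ (α.or β)) (hα : ProvCn n (insert α Γ) γ)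
    (hβ : ProvCn n (insert β Γ) γ) : ProvCn n Γ γ :=
  (((ProvCn.ax8 α β γ).mp (deduction hα)).mp (deduction hβ)).mp h

theorem and_intro {α β : PFs} (hα : ProvCn n Γ α) (hβ : ProvCn n Γ β) :
    ProvCn n Γ (α.and β) :=
  ((ProvCn.ax3 α β).mp hα).mp hβ

theorem imp_trans {α β γ : PFs} (h₁ : ProvCn n Γ (α.imp β)) (h₂ : ProvCn n Γ (β.imp γ)) :
    ProvCn n Γ (α.imp γ) :=
  deduction <| (h₂.mono (Set.subset_insert _ _)).mp
    ((h₁.mono (Set.subset_insert _ _)).mp (.prem (Set.mem_insert _ _)))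

theorem pc_of_pw_mem (α : PFs) :
    ∀ m, 1 ≤ m → (∀ i, 1 ≤ i → i ≤ m → pw α i ∈ Γ) → ProvCn n Γ (pc α m)
  | 1, _, h => .prem (h 1 le_rfl le_rfl)
  | m + 2, _, h =>
    and_intro (pc_of_pw_mem α (m + 1) (by omega) fun i h₁ h₂ => h i h₁ (by omega))
      (.prem (h (m + 2) (by omega) le_rfl))

theorem pw_and_neg_imp (α : PFs) : ∀ j, ProvCn n Γ (((pw α j).and (pw α j).neg).imp α)
  | 0 => .ax4 α α.neg
  | j + 1 => imp_trans (imp_trans (.ax5 _ _) (.ax10 _)) (pw_and_neg_imp α j)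

theorem or_imp (hn : 1 ≤ n) (α β : PFs) : ProvCn n Γ (α.or (α.imp β)) := by
  -- Downward induction on `m`, splitting on the instance `(α^m ∧ ¬α^m) ∨ α^{m+1}` of Ax9.
  suffices key : ∀ m ≤ n, ∀ Δ, Γ ⊆ Δ → (∀ i, 1 ≤ i → i ≤ m → pw α i ∈ Δ) →
      ProvCn n Δ (α.or (α.imp β)) from
    key 0 (Nat.zero_le n) Γ le_rfl fun i h₁ h₂ => absurd h₂ (by omega)
  intro m hm
  induction hm using Nat.decreasingInduction with
  | self =>
    intro Δ _ hΔ
    have hbc := (ProvCn.bcn α β).mp (pc_of_pw_mem α n hn hΔ)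
    refine or_elim (.ax9 α) ((ProvCn.ax6 _ _).mp (.prem (Set.mem_insert _ _))) ?_
    refine (ProvCn.ax7 _ _).mp (deduction ?_)
    have hsub : Δ ⊆ insert α (insert α.neg Δ) :=
      (Set.subset_insert _ _).trans (Set.subset_insert _ _)
    exact ((hbc.mono hsub).mp (.prem (by simp))).mp (.prem (by simp))
  | of_succ k _ ih =>
    intro Δ hΓΔ hΔ
    refine or_elim (ProvCn.ax9 ((pw α k).and (pw α k).neg)) ?_ ?_
    · exact (ProvCn.ax6 _ _).mp ((pw_and_neg_imp α k).mp (.prem (Set.mem_insert _ _)))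
    · refine ih _ (hΓΔ.trans (Set.subset_insert _ _)) fun i h₁ h₂ => ?_
      rcases Nat.lt_or_eq_of_le h₂ with h₂ | rfl
      · exact Set.mem_insert_of_mem _ (hΔ i h₁ (by omega))
      · exact Set.mem_insert _ _

theorem exists_mem_of_sUnion {c : Set (Set PFs)} (hc : IsChain (· ⊆ ·) c) (hne : c.Nonempty)
    {φ : PFs} (h : ProvCn n (⋃₀ c) φ) : ∃ s ∈ c, ProvCn n s φ := by
  refine h.induction_prem_valid (motive := fun φ => ∃ s ∈ c, ProvCn n s φ)
    (fun φ hφ => ?_) (fun φ hφ => ⟨hne.some, hne.some_mem, hφ _⟩) ?_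
  · obtain ⟨s, hs, hφs⟩ := hφ
    exact ⟨s, hs, .prem hφs⟩
  · rintro α β ⟨s, hs, hs'⟩ ⟨t, ht, ht'⟩
    rcases hc.total hs ht with hst | hts
    · exact ⟨t, ht, (hs'.mono hst).mp ht'⟩
    · exact ⟨s, hs, hs'.mp (ht'.mono hts)⟩

end ProvCn

/-- C_ω-bivaluations: the clauses common to the bivaluation semantics of every `C_n`. -/
structure IsCωBivaluation (b : PFs → Bool) : Prop where
  and_eq (α β : PFs) : b (α.and β) = (b α && b β)
  or_eq (α β : PFs) : b (α.or β) = (b α || b β)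
  imp_eq (α β : PFs) : b (α.imp β) = (!b α || b β)
  of_neg_eq_false (α : PFs) : b α.neg = false → b α = true
  of_neg_neg (α : PFs) : b α.neg.neg = true → b α = true

structure IsCnBivaluation (n : ℕ) (b : PFs → Bool) : Prop extends IsCωBivaluation b where
  consistent_of_pc (α : PFs) : b (pc α n) = true → (b α && b α.neg) = false
  pc_and (α β : PFs) : b (pc α n) = true → b (pc β n) = true → b (pc (α.and β) n) = true
  pc_or (α β : PFs) : b (pc α n) = true → b (pc β n) = true → b (pc (α.or β) n) = true
  pc_imp (α β : PFs) : b (pc α n) = true → b (pc β n) = true → b (pc (α.imp β) n) = true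

theorem ProvCn.eq_true_of_isCnBivaluation {n : ℕ} {Γ : Set PFs} {φ : PFs} {b : PFs → Bool}
    (hb : IsCnBivaluation n b) (h : ProvCn n Γ φ) (hΓ : ∀ γ ∈ Γ, b γ = true) : b φ = true := by
  induction h with
  | prem hφ => exact hΓ _ hφ
  | mp _ _ ih₁ ih₂ => simpa [hb.imp_eq, ih₂] using ih₁
  | ax9 α =>
    have := hb.of_neg_eq_false α
    simp only [hb.or_eq]
    grind
  | ax10 α =>
    have := hb.of_neg_neg α
    simp only [hb.imp_eq]
    grind
  | bcn α β =>
    have := hb.consistent_of_pc α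
    simp only [hb.imp_eq]
    grind
  | pn α β =>
    have := hb.pc_and α β
    have := hb.pc_or α β
    have := hb.pc_imp α β
    simp only [hb.imp_eq, hb.and_eq]
    grind
  | _ => simp only [hb.imp_eq, hb.and_eq, hb.or_eq]; grind

def IsSaturated (n : ℕ) (φ : PFs) (Δ : Set PFs) : Prop :=
  Maximal (fun Δ => ¬ProvCn n Δ φ) Δ

theorem ProvCn.exists_isSaturated {n : ℕ} {Γ : Set PFs} {φ : PFs} (h : ¬ProvCn n Γ φ) :
    ∃ Δ, Γ ⊆ Δ ∧ IsSaturated n φ Δ :=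
  zorn_subset_nonempty {Δ | ¬ProvCn n Δ φ} (fun c hcS hc hne =>
    ⟨⋃₀ c, fun hp => by
      obtain ⟨s, hs, hps⟩ := ProvCn.exists_mem_of_sUnion hc hne hp
      exact hcS hs hps, fun _ => Set.subset_sUnion_of_mem⟩) Γ h

namespace IsSaturated

variable {n : ℕ} {Δ : Set PFs} {φ : PFs} (hΔ : IsSaturated n φ Δ)
include hΔ

theorem prov_insert_of_not_mem {α : PFs} (hα : α ∉ Δ) : ProvCn n (insert α Δ) φ :=
  not_not.mp (hΔ.not_prop_of_ssuperset (Set.ssubset_insert hα))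

theorem mem_of_prov {α : PFs} (h : ProvCn n Δ α) : α ∈ Δ := by
  by_contra hα
  exact hΔ.prop (h.of_insert (hΔ.prov_insert_of_not_mem hα))

theorem mem_or_mem {α β : PFs} (h : ProvCn n Δ (α.or β)) : α ∈ Δ ∨ β ∈ Δ := by
  by_contra! hαβ
  exact hΔ.prop (h.or_elim (hΔ.prov_insert_of_not_mem hαβ.1) (hΔ.prov_insert_of_not_mem hαβ.2))

theorem and_mem_iff {α β : PFs} : α.and β ∈ Δ ↔ α ∈ Δ ∧ β ∈ Δ :=
  ⟨fun h => ⟨hΔ.mem_of_prov ((ProvCn.ax4 α β).mp (.prem h)),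
      hΔ.mem_of_prov ((ProvCn.ax5 α β).mp (.prem h))⟩,
    fun h => hΔ.mem_of_prov (ProvCn.and_intro (.prem h.1) (.prem h.2))⟩

theorem or_mem_iff {α β : PFs} : α.or β ∈ Δ ↔ α ∈ Δ ∨ β ∈ Δ :=
  ⟨fun h => hΔ.mem_or_mem (.prem h), fun h => h.elim
    (fun h => hΔ.mem_of_prov ((ProvCn.ax6 α β).mp (.prem h)))
    (fun h => hΔ.mem_of_prov ((ProvCn.ax7 α β).mp (.prem h)))⟩

theorem imp_mem_iff (hn : 1 ≤ n) {α β : PFs} : α.imp β ∈ Δ ↔ (α ∈ Δ → β ∈ Δ) := by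
  refine ⟨fun h hα => hΔ.mem_of_prov ((ProvCn.prem h).mp (.prem hα)), fun h => ?_⟩
  rcases hΔ.mem_or_mem (ProvCn.or_imp hn α β) with hα | hαβ
  · exact hΔ.mem_of_prov ((ProvCn.ax1 β α).mp (.prem (h hα)))
  · exact hαβ

theorem pc_mem {α β : PFs} (hα : pc α n ∈ Δ) (hβ : pc β n ∈ Δ) :
    pc (α.and β) n ∈ Δ ∧ pc (α.or β) n ∈ Δ ∧ pc (α.imp β) n ∈ Δ := by
  simpa only [hΔ.and_mem_iff] using
    hΔ.mem_of_prov ((ProvCn.pn α β).mp (ProvCn.and_intro (.prem hα) (.prem hβ)))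

open Classical in
theorem isCnBivaluation (hn : 1 ≤ n) : IsCnBivaluation n (fun α => decide (α ∈ Δ)) where
  and_eq α β := by simp [hΔ.and_mem_iff]
  or_eq α β := by simp [hΔ.or_mem_iff]
  imp_eq α β := by simp [hΔ.imp_mem_iff hn, imp_iff_not_or]
  of_neg_eq_false α h := by
    simpa using (hΔ.mem_or_mem (.ax9 α)).resolve_right (by simpa using h)
  of_neg_neg α h := by simpa using hΔ.mem_of_prov ((ProvCn.ax10 α).mp (.prem (by simpa using h)))
  consistent_of_pc α h := by
    simp only [decide_eq_true_eq, Bool.and_eq_false_iff, decide_eq_false_iff_not] at h ⊢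
    by_contra! hα
    exact hΔ.prop ((((ProvCn.bcn α φ).mp (.prem h)).mp (.prem hα.1)).mp (.prem hα.2))
  pc_and α β hα hβ := by simpa using (hΔ.pc_mem (by simpa using hα) (by simpa using hβ)).1
  pc_or α β hα hβ := by simpa using (hΔ.pc_mem (by simpa using hα) (by simpa using hβ)).2.1
  pc_imp α β hα hβ := by simpa using (hΔ.pc_mem (by simpa using hα) (by simpa using hβ)).2.2

end IsSaturated

theorem ProvCn.of_forall_isCnBivaluation {n : ℕ} {Γ : Set PFs} {φ : PFs} (hn : 1 ≤ n)
    (h : ∀ b, IsCnBivaluation n b → (∀ γ ∈ Γ, b γ = true) → b φ = true) : ProvCn n Γ φ := by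
  classical
  by_contra hφ
  obtain ⟨Δ, hΓΔ, hΔ⟩ := ProvCn.exists_isSaturated hφ
  have := h _ (hΔ.isCnBivaluation hn) fun γ hγ => decide_eq_true (hΓΔ hγ)
  exact hΔ.prop (.prem (of_decide_eq_true this))

theorem pw_pw (α : PFs) (a : ℕ) : ∀ c, pw (pw α a) c = pw α (a + c)
  | 0 => rfl
  | c + 1 => by rw [pw, pw_pw α a c]; rfl

def bivCoord (b : PFs → Bool) (α : PFs) : ℕ → Bool
  | 0 => b α
  | 1 => b α.neg
  | k + 2 => b (pw α (k + 1))

theorem Fin.val_one_of_one_le {n : ℕ} (hn : 1 ≤ n) : ((1 : Fin (n + 1)) : ℕ) = 1 := by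
  rw [Fin.val_one', Nat.mod_eq_of_lt (by omega)]

theorem Tval_apply_one {n : ℕ} (hn : 1 ≤ n) : (Tval n).1 1 = false := by
  show decide (((1 : Fin (n + 1)) : ℕ) ≠ 1) = false
  rw [Fin.val_one_of_one_le hn]
  rfl

theorem Fval_apply_zero {n : ℕ} : (Fval n).1 0 = false := by
  simp [Fval]

namespace Snap

variable {n : ℕ}

theorem apply_eq_true_of_ne {z : Snap n} {i j : Fin (n + 1)} (hi : z.1 i = false) (hji : j ≠ i) :
    z.1 j = true := by
  by_contra hj
  exact hji (z.2 j i (by simpa using hj) hi)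

theorem eq_of_apply_eq_false {z w : Snap n} {i : Fin (n + 1)} (hz : z.1 i = false)
    (hw : w.1 i = false) : z = w := by
  refine Subtype.ext (funext fun j => ?_)
  by_cases hji : j = i
  · rw [hji, hz, hw]
  · rw [apply_eq_true_of_ne hz hji, apply_eq_true_of_ne hw hji]

theorem apply_one_of_apply_zero (hn : 1 ≤ n) {z : Snap n} (h : z.1 0 = false) : z.1 1 = true :=
  apply_eq_true_of_ne h fun h' => by
    have := congrArg Fin.val h'
    rw [Fin.val_one_of_one_le hn, Fin.val_zero] at this
    omega

theorem eq_tval_of_not_mem_BooN (hn : 1 ≤ n) {z : Snap n} (hz : z ∉ BooN n) :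
    ∃ k ≤ n - 1, z = tval n k := by
  have hz : z.1 0 = true ∧ z.1 1 = true := by simpa [BooN] using hz
  by_cases hall : ∃ i, z.1 i = false
  · obtain ⟨i, hi⟩ := hall
    have hi₂ : 2 ≤ (i : ℕ) := by
      by_contra hlt
      rcases (by omega : (i : ℕ) = 0 ∨ (i : ℕ) = 1) with h | h
      · rw [show i = 0 from Fin.ext h, hz.1] at hi
        cases hi
      · rw [show i = 1 from Fin.ext (h.trans (Fin.val_one_of_one_le hn).symm), hz.2] at hi
        cases hi
    refine ⟨i - 2, by omega, eq_of_apply_eq_false hi ?_⟩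
    simp [tval]
    omega
  · push Not at hall
    refine ⟨n - 1, le_rfl, Subtype.ext (funext fun i => ?_)⟩
    simp [tval, hall i]
    omega

end Snap

theorem fst_of_mem_binN {n : ℕ} {f : Bool → Bool → Bool} {z w u : Snap n}
    (h : u ∈ binN f z w) : u.1 0 = f (z.1 0) (w.1 0) := by
  unfold binN at h
  split_ifs at h
  exacts [h.2, h]

theorem mem_BooN_of_mem_binN {n : ℕ} {f : Bool → Bool → Bool} {z w u : Snap n}
    (hz : z ∈ BooN n) (hw : w ∈ BooN n) (h : u ∈ binN f z w) : u ∈ BooN n := by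
  unfold binN at h
  rw [if_pos ⟨hz, hw⟩] at h
  exact h.1

theorem mem_binN {n : ℕ} {f : Bool → Bool → Bool} {z w u : Snap n}
    (h : u.1 0 = f (z.1 0) (w.1 0)) (hBoo : z ∈ BooN n → w ∈ BooN n → u ∈ BooN n) :
    u ∈ binN f z w := by
  unfold binN
  split_ifs with hzw
  exacts [⟨hBoo hzw.1 hzw.2, h⟩, h]

namespace IsCωBivaluation

variable {n : ℕ} {b : PFs → Bool} (hb : IsCωBivaluation b)
include hb

theorem pw_one_of_consistent {γ : PFs} (h : (b γ && b γ.neg) = false) :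
    b (pw γ 1) = true ∧ b (pw γ 1).neg = false := by
  have h₁ := hb.of_neg_eq_false (γ.and γ.neg)
  have h₂ := hb.of_neg_neg (γ.and γ.neg)
  rw [hb.and_eq, h] at h₁ h₂
  show b (γ.and γ.neg).neg = true ∧ b (γ.and γ.neg).neg.neg = false
  exact ⟨by simpa using h₁, by simpa using h₂⟩

theorem pw_of_consistent {γ : PFs} (h : (b γ && b γ.neg) = false) {j : ℕ} (hj : 1 ≤ j) :
    b (pw γ j) = true ∧ b (pw γ j).neg = false := by
  induction j, hj using Nat.le_induction with
  | base => exact hb.pw_one_of_consistent h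
  | succ j _ ih => exact hb.pw_one_of_consistent (γ := pw γ j) (by simp [ih.2])

theorem pc_eq_true_iff {α : PFs} :
    ∀ {m : ℕ}, 1 ≤ m → (b (pc α m) = true ↔ ∀ j, 1 ≤ j → j ≤ m → b (pw α j) = true)
  | 1, _ => ⟨fun h j h₁ h₂ => by rwa [show j = 1 by omega], fun h => h 1 le_rfl le_rfl⟩
  | m + 2, _ => by
    rw [pc, hb.and_eq, Bool.and_eq_true, pc_eq_true_iff (m := m + 1) (by omega)]
    refine ⟨fun h j h₁ h₂ => ?_, fun h => ⟨fun j h₁ h₂ => h j h₁ (by omega), h _ (by omega) le_rfl⟩⟩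
    rcases Nat.lt_or_eq_of_le h₂ with h₂ | rfl
    exacts [h.1 j h₁ (by omega), h.2]

theorem pc_of_consistent (hn : 1 ≤ n) {α : PFs} (h : (b α && b α.neg) = false) :
    b (pc α n) = true :=
  (hb.pc_eq_true_iff hn).2 fun _ hj _ => (hb.pw_of_consistent h hj).1

theorem bivCoord_eq_true_of_lt {α : PFs} {k m : ℕ} (hkm : k < m) (hk : bivCoord b α k = false) :
    bivCoord b α m = true := by
  rcases k with _ | _ | k <;> rcases m with _ | _ | m <;> simp only [bivCoord] at hk ⊢ <;>
    try omega
  · by_contra h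
    rw [hb.of_neg_eq_false α (by simpa using h)] at hk
    cases hk
  · exact (hb.pw_of_consistent (by simp [hk]) (by omega)).1
  · exact (hb.pw_of_consistent (by simp [hk]) (by omega)).1
  · have := (hb.pw_of_consistent (γ := pw α (k + 1)) (by simp [hk]) (j := m - k) (by omega)).1
    rwa [pw_pw, show k + 1 + (m - k) = m + 1 by omega] at this

def snap (n : ℕ) (α : PFs) : Snap n :=
  ⟨fun i => bivCoord b α i, fun i j hi hj => by
    by_contra hij
    rcases Nat.lt_or_gt_of_ne (fun h => hij (Fin.ext h)) with h | h
    · exact absurd (hb.bivCoord_eq_true_of_lt h hi) (by simp [hj])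
    · exact absurd (hb.bivCoord_eq_true_of_lt h hj) (by simp [hi])⟩

theorem snap_apply_zero (α : PFs) : (hb.snap n α).1 0 = b α := rfl

theorem snap_apply_one (hn : 1 ≤ n) (α : PFs) : (hb.snap n α).1 1 = b α.neg := by
  show bivCoord b α (1 : Fin (n + 1)) = _
  rw [Fin.val_one_of_one_le hn]
  rfl

theorem snap_mem_BooN_iff (hn : 1 ≤ n) {α : PFs} :
    hb.snap n α ∈ BooN n ↔ (b α && b α.neg) = false := by
  show ((hb.snap n α).1 0 && (hb.snap n α).1 1) = false ↔ _
  rw [hb.snap_apply_zero, hb.snap_apply_one hn]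

theorem bivCoord_of_snap_eq {α : PFs} {z : Snap n} (h : hb.snap n α = z) {i : ℕ} (hi : i ≤ n) :
    bivCoord b α i = z.1 ⟨i, by omega⟩ :=
  congrArg (fun z : Snap n => z.1 ⟨i, by omega⟩) h

end IsCωBivaluation

namespace IsCnBivaluation

variable {n : ℕ} {b : PFs → Bool} (hb : IsCnBivaluation n b)
include hb

theorem consistent_of_pc_imp (hn : 1 ≤ n) {α β γ : PFs}
    (hpc : b (pc α n) = true → b (pc β n) = true → b (pc γ n) = true)
    (hα : (b α && b α.neg) = false) (hβ : (b β && b β.neg) = false) :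
    (b γ && b γ.neg) = false :=
  hb.consistent_of_pc γ (hpc (hb.pc_of_consistent hn hα) (hb.pc_of_consistent hn hβ))

theorem isHomN_snap (hn : 1 ≤ n) : IsHomN n (hb.snap n) := by
  have hBoo {α β γ : PFs} (hpc : b (pc α n) = true → b (pc β n) = true → b (pc γ n) = true) :
      hb.snap n α ∈ BooN n → hb.snap n β ∈ BooN n → hb.snap n γ ∈ BooN n := by
    simpa only [hb.snap_mem_BooN_iff hn] using hb.consistent_of_pc_imp hn hpc
  refine ⟨fun α => ⟨(hb.snap_apply_one hn α).symm, ?_⟩,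
    fun α β => mem_binN (hb.and_eq α β) (hBoo (hb.pc_and α β)),
    fun α β => mem_binN (hb.or_eq α β) (hBoo (hb.pc_or α β)),
    fun α β => mem_binN (hb.imp_eq α β) (hBoo (hb.pc_imp α β))⟩
  rw [hb.snap_apply_one hn]
  exact hb.of_neg_neg α

theorem snap_and_neg_of_eq_tval_zero (hn : 2 ≤ n) {α : PFs} (h : hb.snap n α = tval n 0) :
    hb.snap n (α.and α.neg) = Tval n := by
  refine Snap.eq_of_apply_eq_false (i := 1) ?_ (Tval_apply_one (by omega))
  rw [hb.snap_apply_one (by omega)]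
  exact hb.bivCoord_of_snap_eq h (i := 2) hn

theorem snap_of_eq_tval (hn : 2 ≤ n) {α : PFs} {k : ℕ} (hk₁ : 1 ≤ k) (hk : k ≤ n - 1)
    (h : hb.snap n α = tval n k) :
    hb.snap n (α.and α.neg) ∈ InN n ∧ hb.snap n (pw α 1) = tval n (k - 1) := by
  have coord {i : ℕ} (hi : i ≤ n) : bivCoord b α i = decide (i ≠ k + 2) :=
    hb.bivCoord_of_snap_eq h hi
  have hα : b α = true := by simpa [bivCoord] using coord (i := 0) (by omega)
  have hαneg : b α.neg = true := by simpa [bivCoord] using coord (i := 1) (by omega)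
  have hpw_one : b (pw α 1) = true := by
    simpa [bivCoord, show k ≠ 0 by omega] using coord (i := 2) hn
  have hpw : b (pw α (k + 1)) = false := by
    rcases (by omega : k + 2 ≤ n ∨ k = n - 1) with hkn | rfl
    · simpa [bivCoord] using coord hkn
    by_contra hpw
    have hpc : b (pc α n) = true := (hb.pc_eq_true_iff (by omega)).2 fun j hj₁ hj₂ => by
      rcases (by omega : j ≤ n - 1 ∨ j = n) with hj | hj
      · obtain ⟨j, rfl⟩ := Nat.exists_eq_add_of_le' hj₁
        simpa [bivCoord, show j ≠ n - 1 by omega] using coord (i := j + 2) (by omega)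
      · rw [hj, show n = n - 1 + 1 by omega]
        simpa using hpw
    simpa [hα, hαneg] using hb.consistent_of_pc α hpc
  refine ⟨⟨fun hT => ?_, fun hF => ?_⟩, ?_⟩
  · have := congrArg (fun z : Snap n => z.1 1) hT
    rw [hb.snap_apply_one (by omega), Tval_apply_one (by omega)] at this
    change b (pw α 1) = false at this
    simp [hpw_one] at this
  · have := congrArg (fun z : Snap n => z.1 0) hF
    simp [hb.snap_apply_zero, Fval_apply_zero, hb.and_eq, hα, hαneg] at this
  · obtain ⟨k, rfl⟩ := Nat.exists_eq_add_of_le' hk₁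
    refine Snap.eq_of_apply_eq_false (i := ⟨k + 2, by omega⟩) ?_ (by simp [tval])
    show b (pw (pw α 1) (k + 1)) = false
    rwa [pw_pw, Nat.add_comm]

theorem exists_FCn (hn : 2 ≤ n) : ∃ ν : PFs → Snap n, FCn n ν ∧ ∀ α, (ν α).1 0 = b α :=
  ⟨hb.snap n, ⟨hb.isHomN_snap (by omega), fun _ => hb.snap_and_neg_of_eq_tval_zero hn,
    fun _ _ hk₁ hk h => hb.snap_of_eq_tval hn hk₁ hk h⟩, fun _ => rfl⟩

end IsCnBivaluation

namespace IsHomN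

variable {n : ℕ} {ν : PFs → Snap n} (hν : IsHomN n ν)
include hν

theorem isCωBivaluation_fst (hn : 1 ≤ n) : IsCωBivaluation (fun α => (ν α).1 0) where
  and_eq α β := fst_of_mem_binN (hν.2.1 α β)
  or_eq α β := fst_of_mem_binN (hν.2.2.1 α β)
  imp_eq α β := fst_of_mem_binN (hν.2.2.2 α β)
  of_neg_eq_false α h := by
    rw [(hν.1 α).1] at h
    by_contra h₀
    simp [Snap.apply_one_of_apply_zero hn (by simpa using h₀)] at h
  of_neg_neg α h := (hν.1 α).2 (by rwa [(hν.1 α.neg).1] at h)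

theorem mem_BooN_iff {α : PFs} : ν α ∈ BooN n ↔ ((ν α).1 0 && (ν α.neg).1 0) = false := by
  rw [(hν.1 α).1]
  rfl

end IsHomN

namespace FCn

variable {n : ℕ} {ν : PFs → Snap n} (hν : FCn n ν)
include hν

theorem fst_pw_eq_false (hn : 2 ≤ n) :
    ∀ {k : ℕ}, k ≤ n - 1 → ∀ {α : PFs}, ν α = tval n k → (ν (pw α (k + 1))).1 0 = false
  | 0, _, α, h => by
    show (ν (α.and α.neg).neg).1 0 = false
    rw [(hν.1.1 _).1, hν.2.1 α h, Tval_apply_one (by omega)]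
  | k + 1, hk, α, h => by
    have := fst_pw_eq_false hn (k := k) (by omega) (hν.2.2 α (k + 1) (by omega) hk h).2
    rwa [pw_pw, Nat.add_comm 1] at this

theorem mem_BooN_of_fst_pc (hn : 2 ≤ n) {α : PFs} (h : (ν (pc α n)).1 0 = true) :
    ν α ∈ BooN n := by
  by_contra hα
  obtain ⟨k, hk, hαk⟩ := Snap.eq_tval_of_not_mem_BooN (by omega) hα
  have := ((hν.1.isCωBivaluation_fst (by omega)).pc_eq_true_iff (by omega)).1 h (k + 1)
    (by omega) (by omega)
  rw [hν.fst_pw_eq_false hn hk hαk] at this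
  cases this

theorem isCnBivaluation_fst (hn : 2 ≤ n) : IsCnBivaluation n (fun α => (ν α).1 0) := by
  have hb := hν.1.isCωBivaluation_fst (by omega)
  have hpc {α β γ : PFs} (hγ : ν α ∈ BooN n → ν β ∈ BooN n → ν γ ∈ BooN n)
      (hα : (ν (pc α n)).1 0 = true) (hβ : (ν (pc β n)).1 0 = true) :
      (ν (pc γ n)).1 0 = true :=
    hb.pc_of_consistent (by omega) (hν.1.mem_BooN_iff.1
      (hγ (hν.mem_BooN_of_fst_pc hn hα) (hν.mem_BooN_of_fst_pc hn hβ)))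
  exact { hb with
    consistent_of_pc := fun α h => hν.1.mem_BooN_iff.1 (hν.mem_BooN_of_fst_pc hn h)
    pc_and := fun α β => hpc fun hα hβ => mem_BooN_of_mem_binN hα hβ (hν.1.2.1 α β)
    pc_or := fun α β => hpc fun hα hβ => mem_BooN_of_mem_binN hα hβ (hν.1.2.2.1 α β)
    pc_imp := fun α β => hpc fun hα hβ => mem_BooN_of_mem_binN hα hβ (hν.1.2.2.2 α β) }

end FCn

/-- Soundness and completeness of `C_n` with respect to the
RNmatrix `RM_{C_n}`: `Γ ⊢_{C_n} φ` iff for every `ν ∈ F_{C_n}` with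
`ν[Γ] ⊆ D_n` one has `ν(φ) ∈ D_n`. -/
theorem stmt_14 (n : ℕ) (hn : 2 ≤ n) (Γ : Set PFs) (φ : PFs) :
    ProvCn n Γ φ ↔
      ∀ ν : PFs → Snap n, FCn n ν → (∀ γ ∈ Γ, ν γ ∈ Dn n) → ν φ ∈ Dn n := by
  refine ⟨fun h ν hν hΓ => h.eq_true_of_isCnBivaluation (hν.isCnBivaluation_fst hn) hΓ,
    fun h => ProvCn.of_forall_isCnBivaluation (by omega) fun b hb hΓ => ?_⟩
  obtain ⟨ν, hν, hνb⟩ := hb.exists_FCn hn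
  simpa [Dn, hνb] using h ν hν fun γ hγ => by simpa [Dn, hνb] using hΓ γ hγ
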